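/- Let L > 0 and c_p > 0. For each t ∈ ℕ let f_t : E → ℝ be convex, differentiable and L-smooth, with a common minimizer x* ∈ E satisfying f_t(x*) ≤ f_t(y) for all y ∈ E and all t. Starting from x_0 ∈ E, define SGD iterates x_{t+1} = x_t − η_t∇f_t(x_t), where (η_t) are the AdaSPS stepsizes with ℓ_t = f_t(x*), and assume ∇f_t(x_t) ≠ 0 for all t. If c_p·√(f_0(x_0) − f_0(x*)) ≥ 1, then for every t ∈ ℕ: (a) ‖x_{t+1} − x*‖² ≤ ‖x_t − x*‖² − η_t·⟨∇f_t(x_t), x_t − x*⟩, and in particular ‖x_{t+1} − x*‖ ≤ ‖x_t − x*‖; and (b) η_t ≥ 1/(4·c_p²·L²·‖x_0 − x*‖²). -/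

import Mathlib

open Finset RealInnerProductSpace

/-!
Smoothness and the common minimizer give `‖∇f_t(x_t)‖² ≤ 2L (f_t(x_t) - f_t(x*))`, so every
AdaSPS candidate stepsize, and hence their running minimum `η_t`, is at least
`1 / (2 c_p L √S_t)` with `S_t = ∑_{s ≤ t} (f_s(x_s) - f_s(x*))`. The scaling condition makes
`c_p √S_t ≥ 1`, so `η_t ‖∇f_t(x_t)‖² ≤ f_t(x_t) - f_t(x*) ≤ ⟪∇f_t(x_t), x_t - x*⟫` by convexity,
which is (a). Telescoping (a) and using that `η` is nonincreasing gives
`η_t S_t ≤ ‖x_0 - x*‖²`; squaring the lower bound eliminates `S_t`: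
`1 ≤ 4 c_p² L² η_t² S_t ≤ 4 c_p² L² η_t ‖x_0 - x*‖²`.
-/

section Smooth

variable {E : Type*} [NormedAddCommGroup E] [InnerProductSpace ℝ E]

theorem norm_sub_smul_sub_sq_le {x y g : E} {η : ℝ} (hη : 0 ≤ η)
    (hg : η * ‖g‖ ^ 2 ≤ ⟪g, x - y⟫) :
    ‖x - η • g - y‖ ^ 2 ≤ ‖x - y‖ ^ 2 - η * ⟪g, x - y⟫ := by
  rw [sub_right_comm, norm_sub_sq_real, real_inner_smul_right, norm_smul, Real.norm_of_nonneg hη,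
    real_inner_comm]
  nlinarith [mul_le_mul_of_nonneg_left hg hη]

variable [CompleteSpace E] {f : E → ℝ} {G : E → E} {L : ℝ}

theorem descent_lemma (hgrad : ∀ y, HasGradientAt f (G y) y)
    (hsmooth : ∀ u v, ‖G u - G v‖ ≤ L * ‖u - v‖) (u v : E) :
    f v ≤ f u + ⟪G u, v - u⟫ + L / 2 * ‖v - u‖ ^ 2 := by
  set w := v - u
  have hφ : ∀ t : ℝ, HasDerivAt (fun t : ℝ => f (u + t • w)) ⟪G (u + t • w), w⟫ t := fun t =>
    (hgrad _).hasFDerivAt.comp_hasDerivAt t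
      (by simpa using ((hasDerivAt_id t).smul_const w).const_add u)
  have hB : ∀ t : ℝ, HasDerivAt (fun t : ℝ => f u + t * ⟪G u, w⟫ + L / 2 * t ^ 2 * ‖w‖ ^ 2)
      (⟪G u, w⟫ + L * t * ‖w‖ ^ 2) t := fun t => by
    refine ((((hasDerivAt_id t).mul_const ⟪G u, w⟫).const_add (f u)).add
      (((hasDerivAt_pow 2 t).const_mul (L / 2)).mul_const (‖w‖ ^ 2))).congr_deriv ?_
    ring
  have key := image_le_of_deriv_right_le_deriv_boundary (a := 0) (b := 1)
    (fun t _ => (hφ t).continuousAt.continuousWithinAt) (fun t _ => (hφ t).hasDerivWithinAt)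
    (by simp) (fun t _ => (hB t).continuousAt.continuousWithinAt)
    (fun t _ => (hB t).hasDerivWithinAt) ?_ (Set.right_mem_Icc.2 zero_le_one)
  · simpa [w] using key
  intro t ht
  have : ⟪G (u + t • w) - G u, w⟫ ≤ L * t * ‖w‖ ^ 2 := calc
    ⟪G (u + t • w) - G u, w⟫ ≤ ‖G (u + t • w) - G u‖ * ‖w‖ := real_inner_le_norm _ _
    _ ≤ L * ‖t • w‖ * ‖w‖ := by
      gcongr
      simpa using hsmooth (u + t • w) u
    _ = L * t * ‖w‖ ^ 2 := by rw [norm_smul, Real.norm_of_nonneg ht.1]; ring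
  rw [inner_sub_left] at this
  linarith

theorem sq_norm_le_two_mul_sub_of_forall_le (hL : 0 < L) (hgrad : ∀ y, HasGradientAt f (G y) y)
    (hsmooth : ∀ u v, ‖G u - G v‖ ≤ L * ‖u - v‖) {xstar : E} (hmin : ∀ y, f xstar ≤ f y)
    (u : E) : ‖G u‖ ^ 2 ≤ 2 * L * (f u - f xstar) := by
  have h := descent_lemma hgrad hsmooth u (u - L⁻¹ • G u)
  rw [sub_sub_cancel_left, inner_neg_right, real_inner_smul_right, real_inner_self_eq_norm_sq,
    norm_neg, norm_smul, Real.norm_of_nonneg (inv_nonneg.2 hL.le)] at h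
  have e : L⁻¹ * ‖G u‖ ^ 2 - L / 2 * (L⁻¹ * ‖G u‖) ^ 2 = ‖G u‖ ^ 2 / (2 * L) := by
    field_simp; ring
  rw [← div_le_iff₀' (by positivity)]
  linarith [hmin (u - L⁻¹ • G u)]

end Smooth

section RunningMin

variable {α : Type*} [LinearOrder α] {η β : ℕ → α}

theorem antitone_of_eq_min_succ (hsucc : ∀ t, η (t + 1) = min (β (t + 1)) (η t)) :
    Antitone η :=
  antitone_nat_of_succ_le fun t => (hsucc t).trans_le (min_le_right _ _)

theorem le_of_eq_min_succ (h0 : η 0 = β 0) (hsucc : ∀ t, η (t + 1) = min (β (t + 1)) (η t)) :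
    ∀ t, η t ≤ β t
  | 0 => h0.le
  | t + 1 => (hsucc t).trans_le (min_le_left _ _)

theorem le_of_eq_min_succ_of_antitone {b : ℕ → α} (hb : Antitone b) (hbβ : ∀ t, b t ≤ β t)
    (h0 : η 0 = β 0) (hsucc : ∀ t, η (t + 1) = min (β (t + 1)) (η t)) : ∀ t, b t ≤ η t
  | 0 => h0 ▸ hbβ 0
  | t + 1 => (hsucc t) ▸ le_min (hbβ _)
      ((hb t.le_succ).trans (le_of_eq_min_succ_of_antitone hb hbβ h0 hsucc t))

end RunningMin

theorem sum_range_le_sub_of_le_sub {a c : ℕ → ℝ} (h : ∀ s, a (s + 1) ≤ a s - c s) (n : ℕ) :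
    ∑ s ∈ range n, c s ≤ a 0 - a n :=
  (sum_le_sum fun s _ => by linarith [h s]).trans_eq (sum_range_sub' a n)

theorem mul_sum_range_le_of_antitone {η g : ℕ → ℝ} (hη : Antitone η) (hg : ∀ s, 0 ≤ g s)
    (n : ℕ) : η n * ∑ s ∈ range (n + 1), g s ≤ ∑ s ∈ range (n + 1), η s * g s := by
  rw [mul_sum]
  exact sum_le_sum fun s hs =>
    mul_le_mul_of_nonneg_right (hη (Nat.lt_succ_iff.1 (mem_range.1 hs))) (hg s)

theorem one_div_sq_mul_le {η k S D : ℝ} (hk : 0 < k) (hS : 0 < S)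
    (hlow : 1 / (k * √S) ≤ η) (hup : η * S ≤ D) : 1 / (k ^ 2 * D) ≤ η := by
  have hη : 0 ≤ η := (by positivity : (0 : ℝ) ≤ 1 / (k * √S)).trans hlow
  have h1 : 1 ≤ η * (k * √S) := (div_le_iff₀ (mul_pos hk (Real.sqrt_pos.2 hS))).1 hlow
  refine div_le_of_le_mul₀ (mul_nonneg (sq_nonneg k) ((mul_nonneg hη hS.le).trans hup)) hη ?_
  calc 1 ≤ (η * (k * √S)) ^ 2 := one_le_pow₀ h1
    _ = k ^ 2 * η * (η * S) := by rw [mul_pow, mul_pow, Real.sq_sqrt hS.le]; ring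
    _ ≤ k ^ 2 * η * D := by gcongr
    _ = η * (k ^ 2 * D) := by ring

/-- The AdaSPS candidate stepsize at step `t`, where `gap s = f_s(x_s) - ℓ_s` and
`q s = ‖∇f_s(x_s)‖²`; the AdaSPS stepsize is the running minimum of these candidates. -/
noncomputable def adaSPSCandidate (c : ℝ) (gap q : ℕ → ℝ) (t : ℕ) : ℝ :=
  gap t / (c * q t * √(∑ s ∈ range (t + 1), gap s))

section AdaSPS

variable {c L : ℝ} {gap q η : ℕ → ℝ}

theorem adaSPSCandidate_mul_le (hc : 0 < c) (hgap : ∀ s, 0 ≤ gap s)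
    (hscale : 1 ≤ c * √(gap 0)) {t : ℕ} (hq : 0 ≤ q t) :
    adaSPSCandidate c gap q t * q t ≤ gap t := by
  have hS : gap 0 ≤ ∑ s ∈ range (t + 1), gap s :=
    single_le_sum (fun s _ => hgap s) (mem_range.2 t.succ_pos)
  have hcS : 1 ≤ c * √(∑ s ∈ range (t + 1), gap s) :=
    hscale.trans (by gcongr)
  rw [adaSPSCandidate, div_mul_eq_mul_div]
  refine div_le_of_le_mul₀ (by positivity) (hgap t) ?_
  nlinarith [mul_nonneg (hgap t) hq]

theorem one_div_le_adaSPSCandidate (hc : 0 < c) (hL : 0 < L) (hgap : ∀ s, 0 ≤ gap s) {t : ℕ}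
    (hq : 0 < q t) (hqL : q t ≤ 2 * L * gap t) :
    1 / (2 * c * L * √(∑ s ∈ range (t + 1), gap s)) ≤ adaSPSCandidate c gap q t := by
  have hgapt : 0 < gap t := pos_of_mul_pos_right (hq.trans_le hqL) (by positivity)
  have hS : 0 < √(∑ s ∈ range (t + 1), gap s) :=
    Real.sqrt_pos.2 (sum_pos' (fun s _ => hgap s) ⟨t, self_mem_range_succ t, hgapt⟩)
  rw [adaSPSCandidate, div_le_div_iff₀ (by positivity) (by positivity)]
  nlinarith [mul_le_mul_of_nonneg_left hqL (by positivity : 0 ≤ c * √(∑ s ∈ range (t + 1), gap s))]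

theorem one_div_le_of_adaSPS (hc : 0 < c) (hL : 0 < L) (hgap : ∀ s, 0 < gap s)
    (hq : ∀ t, 0 < q t) (hqL : ∀ t, q t ≤ 2 * L * gap t)
    (h0 : η 0 = adaSPSCandidate c gap q 0)
    (hsucc : ∀ t, η (t + 1) = min (adaSPSCandidate c gap q (t + 1)) (η t)) (t : ℕ) :
    1 / (2 * c * L * √(∑ s ∈ range (t + 1), gap s)) ≤ η t := by
  refine le_of_eq_min_succ_of_antitone ?_
    (fun t => one_div_le_adaSPSCandidate hc hL (fun s => (hgap s).le) (hq t) (hqL t)) h0 hsucc t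
  have hS : ∀ t, 0 < √(∑ s ∈ range (t + 1), gap s) := fun t =>
    Real.sqrt_pos.2 (sum_pos (fun s _ => hgap s) nonempty_range_add_one)
  refine antitone_nat_of_succ_le fun t => one_div_le_one_div_of_le (by have := hS t; positivity) ?_
  rw [sum_range_succ _ (t + 1)]
  gcongr
  exact le_add_of_nonneg_right (hgap _).le

theorem one_div_le_of_adaSPS_of_le_sub (hc : 0 < c) (hL : 0 < L) (hgap : ∀ s, 0 < gap s)
    (hq : ∀ t, 0 < q t) (hqL : ∀ t, q t ≤ 2 * L * gap t)
    (h0 : η 0 = adaSPSCandidate c gap q 0)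
    (hsucc : ∀ t, η (t + 1) = min (adaSPSCandidate c gap q (t + 1)) (η t))
    {a : ℕ → ℝ} (ha : ∀ t, 0 ≤ a t) (hdecr : ∀ t, a (t + 1) ≤ a t - η t * gap t) (t : ℕ) :
    1 / (4 * c ^ 2 * L ^ 2 * a 0) ≤ η t := by
  have hS : 0 < ∑ s ∈ range (t + 1), gap s := sum_pos (fun s _ => hgap s) nonempty_range_add_one
  have hup : η t * ∑ s ∈ range (t + 1), gap s ≤ a 0 :=
    (mul_sum_range_le_of_antitone (antitone_of_eq_min_succ hsucc) (fun s => (hgap s).le) t).trans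
      ((sum_range_le_sub_of_le_sub hdecr (t + 1)).trans (sub_le_self _ (ha _)))
  rw [show 4 * c ^ 2 * L ^ 2 = (2 * c * L) ^ 2 by ring]
  exact one_div_sq_mul_le (by positivity) hS (one_div_le_of_adaSPS hc hL hgap hq hqL h0 hsucc t) hup

end AdaSPS

/-- AdaSPS under interpolation, per-step estimates: with convex `L`-smooth `f t`
sharing a common minimizer `x*`, SGD iterates with AdaSPS stepsizes
(`ℓ t = f t x*`), nonzero gradients at the iterates and
`c_p √(f_0(x_0) − f_0(x*)) ≥ 1`, for every `t`:
(a) `‖x_{t+1} − x*‖² ≤ ‖x_t − x*‖² − η_t ⟨∇f_t(x_t), x_t − x*⟩`, in particular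
    `‖x_{t+1} − x*‖ ≤ ‖x_t − x*‖`; and
(b) `η_t ≥ 1/(4 c_p² L² ‖x_0 − x*‖²)`. -/
theorem stmt_14 {d : ℕ} (L c_p : ℝ) (hL : 0 < L) (hcp : 0 < c_p)
    (xstar : EuclideanSpace ℝ (Fin d))
    (f : ℕ → EuclideanSpace ℝ (Fin d) → ℝ)
    (G : ℕ → EuclideanSpace ℝ (Fin d) → EuclideanSpace ℝ (Fin d))
    (x : ℕ → EuclideanSpace ℝ (Fin d)) (η : ℕ → ℝ)
    (hgrad : ∀ t y, HasGradientAt (f t) (G t y) y)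
    (hconv : ∀ t u v, f t v ≥ f t u + ⟪G t u, v - u⟫)
    (hsmooth : ∀ t u v, ‖G t u - G t v‖ ≤ L * ‖u - v‖)
    (hmin : ∀ t y, f t xstar ≤ f t y)
    (hGne : ∀ t, G t (x t) ≠ 0)
    (hη0 : η 0 = (f 0 (x 0) - f 0 xstar) /
      (c_p * ‖G 0 (x 0)‖ ^ 2 * Real.sqrt (f 0 (x 0) - f 0 xstar)))
    (hη : ∀ t, η (t + 1) = min
      ((f (t + 1) (x (t + 1)) - f (t + 1) xstar) /
        (c_p * ‖G (t + 1) (x (t + 1))‖ ^ 2 *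
          Real.sqrt (∑ s ∈ range (t + 2), (f s (x s) - f s xstar))))
      (η t))
    (hx : ∀ t, x (t + 1) = x t - η t • G t (x t))
    (hscale : 1 ≤ c_p * Real.sqrt (f 0 (x 0) - f 0 xstar)) :
    ∀ t : ℕ,
      (‖x (t + 1) - xstar‖ ^ 2 ≤
          ‖x t - xstar‖ ^ 2 - η t * ⟪G t (x t), x t - xstar⟫ ∧
        ‖x (t + 1) - xstar‖ ≤ ‖x t - xstar‖) ∧
      η t ≥ 1 / (4 * c_p ^ 2 * L ^ 2 * ‖x 0 - xstar‖ ^ 2) := by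
  set gap : ℕ → ℝ := fun t => f t (x t) - f t xstar
  set q : ℕ → ℝ := fun t => ‖G t (x t)‖ ^ 2
  have hq : ∀ t, 0 < q t := fun t => pow_pos (norm_pos_iff.2 (hGne t)) 2
  have hqL : ∀ t, q t ≤ 2 * L * gap t := fun t =>
    sq_norm_le_two_mul_sub_of_forall_le hL (hgrad t) (hsmooth t) (hmin t) (x t)
  have hgap : ∀ t, 0 < gap t := fun t =>
    pos_of_mul_pos_right ((hq t).trans_le (hqL t)) (by positivity)
  have h0 : η 0 = adaSPSCandidate c_p gap q 0 := by rw [hη0, adaSPSCandidate, sum_range_one]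
  have hsucc : ∀ t, η (t + 1) = min (adaSPSCandidate c_p gap q (t + 1)) (η t) := hη
  have hηnonneg : ∀ t, 0 ≤ η t :=
    le_of_eq_min_succ_of_antitone (β := adaSPSCandidate c_p gap q) antitone_const
      (fun t => div_nonneg (hgap t).le (by have := hq t; positivity)) h0 hsucc
  have hηq : ∀ t, η t * q t ≤ gap t := fun t =>
    (mul_le_mul_of_nonneg_right (le_of_eq_min_succ h0 hsucc t) (hq t).le).trans
      (adaSPSCandidate_mul_le hcp (fun s => (hgap s).le) hscale (hq t).le)
  have hinner : ∀ t, gap t ≤ ⟪G t (x t), x t - xstar⟫ := fun t => by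
    have := hconv t (x t) xstar
    rw [← neg_sub, inner_neg_right] at this
    linarith
  have hstep : ∀ t, ‖x (t + 1) - xstar‖ ^ 2 ≤
      ‖x t - xstar‖ ^ 2 - η t * ⟪G t (x t), x t - xstar⟫ := fun t =>
    hx t ▸ norm_sub_smul_sub_sq_le (hηnonneg t) ((hηq t).trans (hinner t))
  have hdecr : ∀ t, ‖x (t + 1) - xstar‖ ^ 2 ≤ ‖x t - xstar‖ ^ 2 - η t * gap t := fun t =>
    (hstep t).trans (by gcongr; exacts [hηnonneg t, hinner t])
  refine fun t => ⟨⟨hstep t, ?_⟩, ?_⟩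
  · rw [← pow_le_pow_iff_left₀ (norm_nonneg _) (norm_nonneg _) two_ne_zero]
    nlinarith [hdecr t, mul_nonneg (hηnonneg t) (hgap t).le]
  · exact one_div_le_of_adaSPS_of_le_sub hcp hL hgap hq hqL h0 hsucc
      (a := fun t => ‖x t - xstar‖ ^ 2) (fun _ => sq_nonneg _) hdecr t
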